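/- arXiv:1810.01370 — 5 statements merged into one kernel-verified Lean document; each statement's English description precedes it below -/
import Mathlib

section
/- Let h : Ω → ℝ be an integrable random variable and X : Ω → ℝ^k a random vector. Then E[h | X] = 0 almost surely if and only if E[h · 1{X ≤ u}] = 0 for all u ∈ ℝ^k, where X ≤ u is understood coordinatewise. -/
open MeasureTheory

lemma box_eq_Iic {k : ℕ} (u : Fin k → ℝ) :
    Set.pi Set.univ (fun i => Set.Iic (u i)) = Set.Iic u := by
  ext x
  simp [Set.mem_pi, Pi.le_def]

lemma measurableSpace_pi_eq_generateFrom_Iic (k : ℕ) :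
    (inferInstance : MeasurableSpace (Fin k → ℝ)) =
      MeasurableSpace.generateFrom (Set.range (Set.Iic : (Fin k → ℝ) → Set (Fin k → ℝ))) := by
  have himg : Set.pi Set.univ '' Set.pi Set.univ (fun _ : Fin k => Set.range (Set.Iic : ℝ → Set ℝ))
      = Set.range (Set.Iic : (Fin k → ℝ) → Set (Fin k → ℝ)) := by
    ext s
    constructor
    · rintro ⟨f, hf, rfl⟩
      choose u hu using fun i => hf i (Set.mem_univ i)
      refine ⟨u, ?_⟩
      rw [← box_eq_Iic]
      exact congrArg (Set.pi Set.univ) (funext hu)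
    · rintro ⟨u, rfl⟩
      exact ⟨fun i => Set.Iic (u i), fun i _ => ⟨u i, rfl⟩, box_eq_Iic u⟩
  rw [← himg]
  refine (generateFrom_eq_pi (fun _ => ?_) (fun _ => ?_)).symm
  · rw [← borel_eq_generateFrom_Iic ℝ]
    exact (BorelSpace.measurable_eq (α := ℝ)).symm
  · refine ⟨fun n => Set.Iic (n : ℝ), fun n => ⟨(n : ℝ), rfl⟩, ?_⟩
    ext x
    simp only [Set.mem_iUnion, Set.mem_Iic, Set.mem_univ, iff_true]
    obtain ⟨n, hn⟩ := exists_nat_ge x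
    exact ⟨n, hn⟩

lemma isPiSystem_Iic_pi {k : ℕ} :
    IsPiSystem (Set.range (Set.Iic : (Fin k → ℝ) → Set (Fin k → ℝ))) := by
  rintro _ ⟨a, rfl⟩ _ ⟨b, rfl⟩ -
  exact ⟨a ⊓ b, Set.Iic_inter_Iic.symm⟩

/-- A conditional moment restriction `E[h|X] = 0` a.s. is equivalent to the continuum of
unconditional moment restrictions `E[h · 1{X ≤ u}] = 0` for all `u ∈ ℝ^k`. -/
theorem statement3 {Ω : Type*} [MeasurableSpace Ω] (μ : Measure Ω) [IsProbabilityMeasure μ]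
    {k : ℕ} (h : Ω → ℝ) (X : Ω → Fin k → ℝ)
    (hh : Integrable h μ) (hX : Measurable X) :
    (μ[h | MeasurableSpace.comap X inferInstance] =ᵐ[μ] 0) ↔
      ∀ u : Fin k → ℝ,
        ∫ ω, h ω * (if ∀ i, X ω i ≤ u i then (1 : ℝ) else 0) ∂μ = 0 := by
  have hm : MeasurableSpace.comap X inferInstance ≤ ‹MeasurableSpace Ω› := hX.comap_le
  -- rewrite the weighted integral as a set integral
  have key : ∀ u : Fin k → ℝ,
      ∫ ω, h ω * (if ∀ i, X ω i ≤ u i then (1 : ℝ) else 0) ∂μ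
        = ∫ ω in X ⁻¹' Set.Iic u, h ω ∂μ := by
    intro u
    rw [← integral_indicator (hX measurableSet_Iic)]
    congr 1
    ext ω
    by_cases hω : ∀ i, X ω i ≤ u i
    · rw [Set.indicator_of_mem (by simpa [Set.mem_Iic, Pi.le_def] using hω)]
      simp [hω]
    · rw [Set.indicator_of_notMem (by simpa [Set.mem_Iic, Pi.le_def] using hω)]
      simp [hω]
  constructor
  · intro hc u
    rw [key u]
    have hs : MeasurableSet[MeasurableSpace.comap X inferInstance] (X ⁻¹' Set.Iic u) := ⟨Set.Iic u, measurableSet_Iic, rfl⟩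
    rw [← setIntegral_condExp hm hh hs]
    refine Eq.trans (setIntegral_congr_ae (hm _ hs) ?_) (integral_zero _ _)
    filter_upwards [hc] with ω hω _ using hω
  · intro H
    have H' : ∀ u : Fin k → ℝ, ∫ ω in X ⁻¹' Set.Iic u, h ω ∂μ = 0 :=
      fun u => (key u).symm.trans (H u)
    -- total integral is zero
    have htot : ∫ ω, h ω ∂μ = 0 := by
      have hsm : ∀ n : ℕ, MeasurableSet (X ⁻¹' Set.Iic (fun _ => (n : ℝ))) :=
        fun n => hX measurableSet_Iic
      have hmono : Monotone (fun n : ℕ => X ⁻¹' Set.Iic (fun _ => (n : ℝ))) := by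
        intro a b hab
        refine Set.preimage_mono (Set.Iic_subset_Iic.mpr ?_)
        intro i
        show (a : ℝ) ≤ (b : ℝ)
        exact_mod_cast hab
      have hunion : (⋃ n : ℕ, X ⁻¹' Set.Iic (fun _ => (n : ℝ))) = Set.univ := by
        ext ω
        simp only [Set.mem_iUnion, Set.mem_preimage, Set.mem_Iic, Pi.le_def, Set.mem_univ,
          iff_true]
        obtain ⟨n, hn⟩ := exists_nat_ge (∑ i, |X ω i|)
        refine ⟨n, fun i => le_trans (le_abs_self _) (le_trans ?_ hn)⟩
        exact Finset.single_le_sum (fun j _ => abs_nonneg (X ω j)) (Finset.mem_univ i)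
      have := tendsto_setIntegral_of_monotone hsm hmono (by rw [hunion]; exact hh.integrableOn)
      rw [hunion] at this
      simp only [Measure.restrict_univ] at this
      have h0 : Filter.Tendsto (fun _ : ℕ => (0 : ℝ)) Filter.atTop (nhds 0) :=
        tendsto_const_nhds
      refine tendsto_nhds_unique ?_ h0
      convert this using 1
      ext n
      exact (H' _).symm
    -- all σ(X)-measurable sets
    have hall : ∀ t : Set (Fin k → ℝ), MeasurableSet t → ∫ ω in X ⁻¹' t, h ω ∂μ = 0 := by
      refine MeasurableSpace.induction_on_inter (measurableSpace_pi_eq_generateFrom_Iic k)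
        isPiSystem_Iic_pi ?_ ?_ ?_ ?_
      · simp
      · rintro _ ⟨u, rfl⟩
        exact H' u
      · intro t ht hCt
        have hcompl : X ⁻¹' tᶜ = (X ⁻¹' t)ᶜ := rfl
        have := integral_add_compl (hX ht) hh
        rw [hcompl]
        rw [htot, hCt] at this
        linarith
      · intro f hdisj hfm hCf
        rw [Set.preimage_iUnion,
          integral_iUnion (fun i => hX (hfm i))
            (fun i j hij => (hdisj hij).preimage X)
            (by exact hh.integrableOn)]
        simp [hCf]
    have : (0 : Ω → ℝ) =ᵐ[μ] μ[h|MeasurableSpace.comap X inferInstance] := by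
      haveI : SigmaFinite (μ.trim hm) := (isFiniteMeasure_trim hm).toSigmaFinite
      refine ae_eq_condExp_of_forall_setIntegral_eq hm hh
        (fun s _ _ => (integrable_zero _ _ _).integrableOn) ?_
        (StronglyMeasurable.aestronglyMeasurable stronglyMeasurable_zero)
      rintro s ⟨t, ht, rfl⟩ _
      exact (integral_zero _ _).trans (hall t ht).symm
    exact this.symm
end

section
/- Let D, Z be {0,1}-valued random variables, X a random vector, and suppose: (i) potential treatments D(0), D(1) satisfy D = Z·D(1) + (1−Z)·D(0); (ii) (D(0), D(1)) ⫫ Z | X; (iii) ℙ(D(1) ≥ D(0) | X) = 1 a.s.; and (iv) the instrument propensity score q(X) = ℙ(Z=1|X) satisfies ε ≤ q(X) ≤ 1−ε a.s. Then E[1 − (1−D)Z/q(X) − D(1−Z)/(1−q(X))] = ℙ(D(1) > D(0)), i.e., the κ normalization equals the probability of being a complier. -/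
/-!
Since `D = Z D(1) + (1 - Z) D(0)` and `Z ∈ {0, 1}`, the weighted moment equals
`1 - (1 - D(1)) Z / q(X) - D(0) (1 - Z) / (1 - q(X))`. Conditional independence of `(D(0), D(1))`
and `Z` given `X` factorizes `E[(1 - D(1)) Z | X] = E[1 - D(1) | X] q(X)`, so the inverse
propensity weight cancels and the second term has expectation `E[1 - D(1)]`; likewise the third
has expectation `E[D(0)]`. What is left is `E[D(1) - D(0)]`, and by monotonicity `D(1) - D(0)` is
the indicator of the compliers.
-/

open MeasureTheory ProbabilityTheory Set

section

variable {Ω : Type*} {m mΩ : MeasurableSpace Ω} {μ : Measure Ω}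

lemma norm_inv_le_inv_of_le {ε x : ℝ} (hε : 0 < ε) (hx : ε ≤ x) : ‖x⁻¹‖ ≤ ε⁻¹ := by
  rw [Real.norm_eq_abs, abs_of_pos (inv_pos.2 (hε.trans_le hx))]
  exact inv_anti₀ hε hx

lemma MeasureTheory.Integrable.div_of_le {f p : Ω → ℝ} {ε : ℝ} (hf : Integrable f μ)
    (hp : AEStronglyMeasurable p μ) (hε : 0 < ε) (hpε : ∀ᵐ ω ∂μ, ε ≤ p ω) :
    Integrable (fun ω => f ω / p ω) μ := by
  simpa only [div_eq_inv_mul, Pi.inv_apply] using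
    hf.bdd_mul hp.inv₀ (hpε.mono fun _ => norm_inv_le_inv_of_le hε)

lemma integral_div_eq_integral_of_condExp_ae_eq_mul [IsFiniteMeasure μ] (hm : m ≤ mΩ)
    {h r p : Ω → ℝ} {ε : ℝ} (hh : Integrable h μ) (hp : StronglyMeasurable[m] p)
    (hε : 0 < ε) (hpε : ∀ᵐ ω ∂μ, ε ≤ p ω) (hfac : μ[h | m] =ᵐ[μ] μ[r | m] * p) :
    ∫ ω, h ω / p ω ∂μ = ∫ ω, r ω ∂μ := by
  have hpull : μ[p⁻¹ * h | m] =ᵐ[μ] p⁻¹ * μ[h | m] :=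
    condExp_stronglyMeasurable_mul_of_bound hm hp.inv₀ hh ε⁻¹
      (hpε.mono fun _ => norm_inv_le_inv_of_le hε)
  have hcancel : μ[p⁻¹ * h | m] =ᵐ[μ] μ[r | m] := by
    filter_upwards [hpull, hfac, hpε] with ω hpull hfac hpε
    have : p ω ≠ 0 := (hε.trans_le hpε).ne'
    simp only [hpull, Pi.mul_apply, Pi.inv_apply, hfac]
    field_simp
  calc ∫ ω, h ω / p ω ∂μ = ∫ ω, (p⁻¹ * h) ω ∂μ := by
        simp only [Pi.mul_apply, Pi.inv_apply, div_eq_inv_mul]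
    _ = ∫ ω, (μ[p⁻¹ * h | m]) ω ∂μ := (integral_condExp hm).symm
    _ = ∫ ω, (μ[r | m]) ω ∂μ := integral_congr_ae hcancel
    _ = ∫ ω, r ω ∂μ := integral_condExp hm

section ZeroOne

variable {U V : Ω → ℝ}

lemma eq_indicator_one_of_zero_or_one (hU : ∀ ω, U ω = 0 ∨ U ω = 1) :
    U = (U ⁻¹' {1}).indicator 1 := by
  funext ω
  rcases hU ω with h | h <;> simp [h]

lemma integrable_of_zero_or_one [IsFiniteMeasure μ] (hU : Measurable U)
    (hUval : ∀ ω, U ω = 0 ∨ U ω = 1) : Integrable U μ := by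
  rw [eq_indicator_one_of_zero_or_one hUval]
  exact (integrable_const 1).indicator (hU (measurableSet_singleton 1))

lemma integrable_mul_of_zero_or_one [IsFiniteMeasure μ] (hU : Measurable U) (hV : Measurable V)
    (hUval : ∀ ω, U ω = 0 ∨ U ω = 1) (hVval : ∀ ω, V ω = 0 ∨ V ω = 1) :
    Integrable (fun ω => U ω * V ω) μ :=
  (integrable_of_zero_or_one hV hVval).bdd_mul hU.aestronglyMeasurable (c := 1)
    (.of_forall fun ω => by rcases hUval ω with h | h <;> simp [h])

variable [StandardBorelSpace Ω] [IsFiniteMeasure μ] {hm : m ≤ mΩ}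

lemma condExp_mul_ae_eq_of_condIndepFun (hU : Measurable U) (hV : Measurable V)
    (hUval : ∀ ω, U ω = 0 ∨ U ω = 1) (hVval : ∀ ω, V ω = 0 ∨ V ω = 1)
    (hUV : CondIndepFun m hm U V μ) :
    μ[U * V | m] =ᵐ[μ] μ[U | m] * μ[V | m] := by
  rw [eq_indicator_one_of_zero_or_one hUval, eq_indicator_one_of_zero_or_one hVval,
    ← inter_indicator_one]
  exact (condIndepFun_iff_condExp_inter_preimage_eq_mul hU hV).1 hUV _ _
    (measurableSet_singleton 1) (measurableSet_singleton 1)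

lemma integral_mul_div_condExp_eq_integral (hU : Measurable U) (hV : Measurable V)
    (hUval : ∀ ω, U ω = 0 ∨ U ω = 1) (hVval : ∀ ω, V ω = 0 ∨ V ω = 1)
    (hUV : CondIndepFun m hm U V μ) {p : Ω → ℝ} {ε : ℝ} (hp : StronglyMeasurable[m] p)
    (hε : 0 < ε) (hpε : ∀ᵐ ω ∂μ, ε ≤ p ω) (hVp : μ[V | m] =ᵐ[μ] p) :
    ∫ ω, U ω * V ω / p ω ∂μ = ∫ ω, U ω ∂μ := by
  refine integral_div_eq_integral_of_condExp_ae_eq_mul (h := U * V) hm ?_ hp hε hpε ?_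
  · exact integrable_mul_of_zero_or_one hU hV hUval hVval
  · filter_upwards [condExp_mul_ae_eq_of_condIndepFun hU hV hUval hVval hUV, hVp]
      with ω hUV hVp
    simp only [hUV, Pi.mul_apply, hVp]

end ZeroOne

lemma condExp_one_sub_ae_eq [IsFiniteMeasure μ] (hm : m ≤ mΩ) {V p : Ω → ℝ} (hV : Integrable V μ)
    (hVp : μ[V | m] =ᵐ[μ] p) : μ[fun ω => 1 - V ω | m] =ᵐ[μ] fun ω => 1 - p ω := by
  have hsub : μ[fun ω => 1 - V ω | m] =ᵐ[μ] μ[fun _ => 1 | m] - μ[V | m] :=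
    condExp_sub (integrable_const 1) hV m
  filter_upwards [hsub, hVp] with ω hsub hVp
  rw [hsub, Pi.sub_apply, condExp_const hm, hVp]

lemma integral_sub_eq_measureReal_lt [IsFiniteMeasure μ] {D0 D1 : Ω → ℝ} (hD0 : Measurable D0)
    (hD1 : Measurable D1) (hD0val : ∀ ω, D0 ω = 0 ∨ D0 ω = 1)
    (hD1val : ∀ ω, D1 ω = 0 ∨ D1 ω = 1) (hmono : ∀ᵐ ω ∂μ, D0 ω ≤ D1 ω) :
    ∫ ω, (D1 ω - D0 ω) ∂μ = μ.real {ω | D0 ω < D1 ω} := by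
  rw [← integral_indicator_one (measurableSet_lt hD0 hD1)]
  refine integral_congr_ae ?_
  filter_upwards [hmono] with ω hmono
  rcases hD0val ω with h0 | h0 <;> rcases hD1val ω with h1 | h1 <;>
    simp [h0, h1] at hmono ⊢
  linarith

/-- Abadie's weight `κ` at instrument `z`, treatment `d` and instrument propensity score `p`. -/
noncomputable def abadieKappa (z d p : ℝ) : ℝ := 1 - (1 - d) * z / p - d * (1 - z) / (1 - p)

lemma abadieKappa_eq (z d0 d1 p : ℝ) (hz : z = 0 ∨ z = 1) :
    abadieKappa z (z * d1 + (1 - z) * d0) p = 1 - (1 - d1) * z / p - d0 * (1 - z) / (1 - p) := by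
  rcases hz with rfl | rfl <;> simp [abadieKappa]

lemma integral_abadieKappa_eq_integral_sub [StandardBorelSpace Ω] [IsProbabilityMeasure μ]
    (hm : m ≤ mΩ) {Z D0 D1 D p : Ω → ℝ} {ε : ℝ}
    (hZ : Measurable Z) (hD0 : Measurable D0) (hD1 : Measurable D1)
    (hZval : ∀ ω, Z ω = 0 ∨ Z ω = 1) (hD0val : ∀ ω, D0 ω = 0 ∨ D0 ω = 1)
    (hD1val : ∀ ω, D1 ω = 0 ∨ D1 ω = 1) (hD : ∀ ω, D ω = Z ω * D1 ω + (1 - Z ω) * D0 ω)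
    (hci : CondIndepFun m hm (fun ω => (D0 ω, D1 ω)) Z μ) (hp : StronglyMeasurable[m] p)
    (hε : 0 < ε) (hpb : ∀ᵐ ω ∂μ, ε ≤ p ω ∧ p ω ≤ 1 - ε) (hZp : μ[Z | m] =ᵐ[μ] p) :
    ∫ ω, abadieKappa (Z ω) (D ω) (p ω) ∂μ = ∫ ω, (D1 ω - D0 ω) ∂μ := by
  have hp' : StronglyMeasurable[m] fun ω => 1 - p ω := stronglyMeasurable_const.sub hp
  have hpε : ∀ᵐ ω ∂μ, ε ≤ p ω := hpb.mono fun _ h => h.1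
  have hpε' : ∀ᵐ ω ∂μ, ε ≤ 1 - p ω := hpb.mono fun _ h => by linarith [h.2]
  have hZ' : Measurable fun ω => 1 - Z ω := measurable_const.sub hZ
  have hD1' : Measurable fun ω => 1 - D1 ω := measurable_const.sub hD1
  have hZval' : ∀ ω, 1 - Z ω = 0 ∨ 1 - Z ω = 1 := fun ω => by
    rcases hZval ω with h | h <;> simp [h]
  have hD1val' : ∀ ω, 1 - D1 ω = 0 ∨ 1 - D1 ω = 1 := fun ω => by
    rcases hD1val ω with h | h <;> simp [h]
  have hD0int := integrable_of_zero_or_one (μ := μ) hD0 hD0val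
  have hD1int := integrable_of_zero_or_one (μ := μ) hD1 hD1val
  have hnever_takers := integral_mul_div_condExp_eq_integral hD1' hZ hD1val' hZval
    (hci.comp (φ := fun d => 1 - d.2) (by fun_prop) measurable_id) hp hε hpε hZp
  have halways_takers := integral_mul_div_condExp_eq_integral hD0 hZ' hD0val hZval'
    (hci.comp (φ := Prod.fst) (ψ := fun z => 1 - z) measurable_fst (by fun_prop)) hp' hε hpε'
    (condExp_one_sub_ae_eq hm (integrable_of_zero_or_one hZ hZval) hZp)
  have hweighted := (integrable_mul_of_zero_or_one (μ := μ) hD1' hZ hD1val' hZval).div_of_le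
    (hp.mono hm).aestronglyMeasurable hε hpε
  have hweighted' := (integrable_mul_of_zero_or_one (μ := μ) hD0 hZ' hD0val hZval').div_of_le
    (hp'.mono hm).aestronglyMeasurable hε hpε'
  calc ∫ ω, abadieKappa (Z ω) (D ω) (p ω) ∂μ
        = ∫ ω, (1 - (1 - D1 ω) * Z ω / p ω - D0 ω * (1 - Z ω) / (1 - p ω)) ∂μ := by
        simp only [hD, abadieKappa_eq _ _ _ _ (hZval _)]
    _ = 1 - ∫ ω, (1 - D1 ω) ∂μ - ∫ ω, D0 ω ∂μ := by
        rw [integral_sub _ hweighted', integral_sub (integrable_const 1) hweighted,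
          hnever_takers, halways_takers]
        · simp
        · exact (integrable_const 1).sub hweighted
    _ = ∫ ω, (D1 ω - D0 ω) ∂μ := by
        rw [integral_sub (integrable_const 1) hD1int, integral_sub hD1int hD0int]
        simp

end

/-- Abadie's κ normalization: under the local treatment effect assumptions,
`E[1 − (1−D)Z/q(X) − D(1−Z)/(1−q(X))] = ℙ(D(1) > D(0))`, the probability of
being a complier. -/
theorem statement9 {Ω : Type*} [MeasurableSpace Ω] [StandardBorelSpace Ω]
    (μ : Measure Ω) [IsProbabilityMeasure μ]
    {k : ℕ} (Z D0 D1 D : Ω → ℝ) (X : Ω → Fin k → ℝ) (q : (Fin k → ℝ) → ℝ) (ε : ℝ)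
    (hZ : Measurable Z) (hD0 : Measurable D0) (hD1 : Measurable D1) (hX : Measurable X)
    (hq : Measurable q)
    (hZval : ∀ ω, Z ω = 0 ∨ Z ω = 1) (hD0val : ∀ ω, D0 ω = 0 ∨ D0 ω = 1)
    (hD1val : ∀ ω, D1 ω = 0 ∨ D1 ω = 1)
    (hD : ∀ ω, D ω = Z ω * D1 ω + (1 - Z ω) * D0 ω)
    (hci : CondIndepFun (MeasurableSpace.comap X inferInstance) hX.comap_le
      (fun ω => (D0 ω, D1 ω)) Z μ)
    (hmono : ∀ᵐ ω ∂μ, D0 ω ≤ D1 ω)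
    (hε : 0 < ε) (hqb : ∀ᵐ ω ∂μ, ε ≤ q (X ω) ∧ q (X ω) ≤ 1 - ε)
    (hqcond : μ[Z | MeasurableSpace.comap X inferInstance] =ᵐ[μ] fun ω => q (X ω)) :
    ∫ ω, (1 - (1 - D ω) * Z ω / q (X ω) - D ω * (1 - Z ω) / (1 - q (X ω))) ∂μ
      = (μ {ω | D0 ω < D1 ω}).toReal := by
  have hqX : StronglyMeasurable[MeasurableSpace.comap X inferInstance] fun ω => q (X ω) :=
    (hq.comp (comap_measurable X)).stronglyMeasurable
  calc _ = ∫ ω, (D1 ω - D0 ω) ∂μ := integral_abadieKappa_eq_integral_sub hX.comap_le hZ hD0 hD1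
        hZval hD0val hD1val hD hci hqX hε hqb hqcond
    _ = _ := integral_sub_eq_measureReal_lt hD0 hD1 hD0val hD1val hmono
end

section
/- Under the local treatment effect assumptions (Z ⫫ (Y(0),Y(1),D(0),D(1)) | X; ε ≤ q(X) ≤ 1−ε a.s.; ℙ(D(1) ≥ D(0)|X) = 1 a.s.; D = ZD(1)+(1−Z)D(0)), for every bounded measurable function f of X: E[(1 − (1−D)Z/q(X) − D(1−Z)/(1−q(X))) · f(X)] = ℙ(C) · E[f(X) | C], where C = {D(1) = 1, D(0) = 0} is the complier event and q(X) = ℙ(Z=1|X). -/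
/-!
As `Z` is binary, `κ = 1` except on `{Z = 1, D(1) = 0}`, where `κ = 1 - 1/q(X)`, and on
`{Z = 0, D(0) = 1}`, where `κ = 1 - 1/(1 - q(X))`. Conditioning on `X`, the independence of `Z`
and `(D(0), D(1))` makes `E[f(X)/q(X); D(1) = 0, Z = 1] = E[f(X) ℙ(Z = 1 | X)/q(X); D(1) = 0]
= E[f(X); D(1) = 0]`, and symmetrically for the other event, so
`E[κ f(X)] = E[f(X)] - E[f(X); D(1) = 0] - E[f(X); D(0) = 1]`. By monotonicity the events
`{D(1) = 0}`, `{D(0) = 1}` and the complier event `C` partition `Ω` up to a null set, which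
leaves `E[f(X); C] = ℙ(C) E[f(X) | C]`.
-/

open MeasureTheory ProbabilityTheory

theorem abs_div_le_div_of_le {a b C ε : ℝ} (ha : |a| ≤ C) (hε : 0 < ε) (hb : ε ≤ b) :
    |a / b| ≤ C / ε := by
  rw [abs_div, abs_of_pos (hε.trans_le hb)]
  exact div_le_div₀ ((abs_nonneg a).trans ha) ha hε hb

section CondExp

variable {Ω : Type*} {m m0 : MeasurableSpace Ω} {μ : Measure Ω}

theorem integral_mul_indicator_one {h : Ω → ℝ} {s : Set Ω} (hs : MeasurableSet s) :
    ∫ ω, h ω * s.indicator (fun _ => 1) ω ∂μ = ∫ ω in s, h ω ∂μ := by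
  simp_rw [← Set.indicator_mul_right, mul_one]
  exact integral_indicator hs

theorem indicator_preimage_one_of_zero_or_one {Z : Ω → ℝ} (hZ : ∀ ω, Z ω = 0 ∨ Z ω = 1) :
    (Z ⁻¹' {1}).indicator (fun _ => (1 : ℝ)) = Z := by
  funext ω
  rcases hZ ω with h | h <;> simp [h]

theorem indicator_preimage_zero_of_zero_or_one {Z : Ω → ℝ} (hZ : ∀ ω, Z ω = 0 ∨ Z ω = 1) :
    (Z ⁻¹' {0}).indicator (fun _ => (1 : ℝ)) = fun ω => 1 - Z ω := by
  funext ω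
  rcases hZ ω with h | h <;> simp [h]

variable [IsFiniteMeasure μ]

theorem integral_mul_condExp_of_bound (hm : m ≤ m0) {h g : Ω → ℝ} (hh : StronglyMeasurable[m] h)
    {C : ℝ} (hhC : ∀ᵐ ω ∂μ, |h ω| ≤ C) (hg : Integrable g μ) :
    ∫ ω, h ω * μ[g|m] ω ∂μ = ∫ ω, h ω * g ω ∂μ :=
  calc ∫ ω, h ω * μ[g|m] ω ∂μ = ∫ ω, μ[h * g|m] ω ∂μ :=
        integral_congr_ae (condExp_stronglyMeasurable_mul_of_bound hm hh hg C hhC).symm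
    _ = ∫ ω, h ω * g ω ∂μ := integral_condExp hm

theorem setIntegral_inter_eq_setIntegral_mul_condExp (hm : m ≤ m0) {A B : Set Ω}
    (hA : MeasurableSet A) (hB : MeasurableSet B)
    (hAB : μ⟦A ∩ B | m⟧ =ᵐ[μ] fun ω => (μ⟦A | m⟧) ω * (μ⟦B | m⟧) ω)
    {h : Ω → ℝ} (hh : StronglyMeasurable[m] h) {C : ℝ} (hhC : ∀ᵐ ω ∂μ, |h ω| ≤ C) :
    ∫ ω in A ∩ B, h ω ∂μ = ∫ ω in A, h ω * (μ⟦B | m⟧) ω ∂μ := by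
  have hind : ∀ s : Set Ω, MeasurableSet s → Integrable (s.indicator fun _ => (1 : ℝ)) μ :=
    fun s hs => (integrable_const 1).indicator hs
  have hBC : ∀ᵐ ω ∂μ, |h ω * (μ⟦B | m⟧) ω| ≤ C * 1 := by
    filter_upwards [hhC, ae_bdd_abs_condExp_of_ae_bdd_abs (m := m) (R := (1 : ℝ))
      (f := B.indicator fun _ => 1) (ae_of_all _ fun ω => by by_cases hω : ω ∈ B <;> simp [hω])]
      with ω hω hBω
    rw [abs_mul]
    exact mul_le_mul hω hBω (abs_nonneg _) ((abs_nonneg _).trans hω)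
  calc ∫ ω in A ∩ B, h ω ∂μ = ∫ ω, h ω * (μ⟦A ∩ B | m⟧) ω ∂μ := by
        rw [integral_mul_condExp_of_bound hm hh hhC (hind _ (hA.inter hB)),
          integral_mul_indicator_one (hA.inter hB)]
    _ = ∫ ω, (h ω * (μ⟦B | m⟧) ω) * (μ⟦A | m⟧) ω ∂μ :=
        integral_congr_ae (hAB.mono fun ω hω => by simp only [hω]; ring)
    _ = ∫ ω in A, h ω * (μ⟦B | m⟧) ω ∂μ := by
        rw [integral_mul_condExp_of_bound hm (h := fun ω => h ω * (μ⟦B | m⟧) ω)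
          (hh.mul stronglyMeasurable_condExp) hBC (hind _ hA),
          integral_mul_indicator_one hA]

theorem setIntegral_inter_div_eq (hm : m ≤ m0) {A B : Set Ω}
    (hA : MeasurableSet A) (hB : MeasurableSet B)
    (hAB : μ⟦A ∩ B | m⟧ =ᵐ[μ] fun ω => (μ⟦A | m⟧) ω * (μ⟦B | m⟧) ω)
    {g p : Ω → ℝ} (hg : StronglyMeasurable[m] g) {C : ℝ} (hgC : ∀ᵐ ω ∂μ, |g ω| ≤ C)
    (hp : StronglyMeasurable[m] p) {ε : ℝ} (hε : 0 < ε) (hpε : ∀ᵐ ω ∂μ, ε ≤ p ω)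
    (hBp : μ⟦B | m⟧ =ᵐ[μ] p) :
    ∫ ω in A ∩ B, g ω / p ω ∂μ = ∫ ω in A, g ω ∂μ := by
  have hbound : ∀ᵐ ω ∂μ, |g ω / p ω| ≤ C / ε := by
    filter_upwards [hgC, hpε] with ω hgω hpω using abs_div_le_div_of_le hgω hε hpω
  rw [setIntegral_inter_eq_setIntegral_mul_condExp hm hA hB hAB (h := fun ω => g ω / p ω)
    (hg.div hp) hbound]
  refine setIntegral_congr_ae hA ?_
  filter_upwards [hBp, hpε] with ω hBω hpω _
  rw [hBω, div_mul_cancel₀ _ (hε.trans_le hpω).ne']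

theorem integrable_div_of_bound {g p : Ω → ℝ} (hg : AEStronglyMeasurable g μ)
    (hp : AEStronglyMeasurable p μ) {C : ℝ} (hgC : ∀ᵐ ω ∂μ, |g ω| ≤ C) {ε : ℝ} (hε : 0 < ε)
    (hpε : ∀ᵐ ω ∂μ, ε ≤ p ω) :
    Integrable (fun ω => g ω / p ω) μ :=
  Integrable.of_bound (hg.div₀ hp) (C / ε) <| by
    filter_upwards [hgC, hpε] with ω hgω hpω using abs_div_le_div_of_le hgω hε hpω

theorem condExp_indicator_preimage_zero (hm : m ≤ m0) {Z : Ω → ℝ} (hZ : Measurable Z)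
    (hZval : ∀ ω, Z ω = 0 ∨ Z ω = 1) :
    μ⟦Z ⁻¹' {0} | m⟧ =ᵐ[μ] fun ω => 1 - μ[Z | m] ω := by
  have hZint : Integrable Z μ := by
    rw [← indicator_preimage_one_of_zero_or_one hZval]
    exact (integrable_const 1).indicator (hZ (measurableSet_singleton 1))
  rw [indicator_preimage_zero_of_zero_or_one hZval]
  filter_upwards [condExp_sub (integrable_const (1 : ℝ)) hZint m] with ω hω
  rw [Pi.sub_apply, condExp_const hm] at hω
  exact hω

end CondExp

theorem setIntegral_eq_toReal_mul_integral_cond {Ω : Type*} [MeasurableSpace Ω] {μ : Measure Ω}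
    {s : Set Ω} (hs : μ s ≠ ⊤) (g : Ω → ℝ) :
    ∫ ω in s, g ω ∂μ = (μ s).toReal * ∫ ω, g ω ∂μ[|s] := by
  rcases eq_or_ne (μ s) 0 with hs0 | hs0
  · simp [Measure.restrict_eq_zero.mpr hs0, hs0]
  · rw [ProbabilityTheory.cond, integral_smul_measure, ENNReal.toReal_inv, smul_eq_mul,
      ← mul_assoc, mul_inv_cancel₀ (ENNReal.toReal_ne_zero.mpr ⟨hs0, hs⟩), one_mul]

theorem kappa_mul_eq_sub_indicator {Ω : Type*} {Z D0 D1 D : Ω → ℝ}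
    (hZval : ∀ ω, Z ω = 0 ∨ Z ω = 1) (hD0val : ∀ ω, D0 ω = 0 ∨ D0 ω = 1)
    (hD1val : ∀ ω, D1 ω = 0 ∨ D1 ω = 1) (hD : ∀ ω, D ω = Z ω * D1 ω + (1 - Z ω) * D0 ω)
    (a b : Ω → ℝ) (ω : Ω) :
    (1 - (1 - D ω) * Z ω / b ω - D ω * (1 - Z ω) / (1 - b ω)) * a ω
      = a ω - (D1 ⁻¹' {0} ∩ Z ⁻¹' {1}).indicator (fun ω => a ω / b ω) ω
        - (D0 ⁻¹' {1} ∩ Z ⁻¹' {0}).indicator (fun ω => a ω / (1 - b ω)) ω := by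
  rw [hD ω]
  rcases hZval ω with hz | hz <;> rcases hD0val ω with h0 | h0 <;>
    rcases hD1val ω with h1 | h1 <;> simp [hz, h0, h1] <;> ring

theorem integral_sub_sub_eq_setIntegral_compliers {Ω : Type*} [MeasurableSpace Ω]
    {μ : Measure Ω} {D0 D1 : Ω → ℝ} (hD0 : Measurable D0) (hD1 : Measurable D1)
    (hD0val : ∀ ω, D0 ω = 0 ∨ D0 ω = 1) (hD1val : ∀ ω, D1 ω = 0 ∨ D1 ω = 1)
    (hmono : ∀ᵐ ω ∂μ, D0 ω ≤ D1 ω) {g : Ω → ℝ} (hg : Integrable g μ) :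
    ∫ ω, g ω ∂μ - ∫ ω in D1 ⁻¹' {0}, g ω ∂μ - ∫ ω in D0 ⁻¹' {1}, g ω ∂μ
      = ∫ ω in {ω | D1 ω = 1 ∧ D0 ω = 0}, g ω ∂μ := by
  have hA1 := hD1 (measurableSet_singleton 0)
  have hA0 := hD0 (measurableSet_singleton 1)
  have hC : MeasurableSet {ω | D1 ω = 1 ∧ D0 ω = 0} :=
    (hD1 (measurableSet_singleton 1)).inter (hD0 (measurableSet_singleton 0))
  rw [← integral_indicator hA1, ← integral_indicator hA0, ← integral_indicator hC,
    ← integral_sub hg (hg.indicator hA1),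
    ← integral_sub (f := fun ω => g ω - (D1 ⁻¹' {0}).indicator g ω) (hg.sub (hg.indicator hA1))
      (hg.indicator hA0)]
  refine integral_congr_ae ?_
  filter_upwards [hmono] with ω hω
  rcases hD0val ω with h0 | h0 <;> rcases hD1val ω with h1 | h1 <;>
    simp [h0, h1] at hω ⊢
  linarith

theorem integral_kappa_mul_eq {Ω : Type*} {m m0 : MeasurableSpace Ω} {μ : Measure Ω}
    [IsFiniteMeasure μ] {Z D0 D1 D : Ω → ℝ} (hm : m ≤ m0) (hZ : Measurable Z) (hD0 : Measurable D0)
    (hD1 : Measurable D1) (hZval : ∀ ω, Z ω = 0 ∨ Z ω = 1) (hD0val : ∀ ω, D0 ω = 0 ∨ D0 ω = 1)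
    (hD1val : ∀ ω, D1 ω = 0 ∨ D1 ω = 1) (hD : ∀ ω, D ω = Z ω * D1 ω + (1 - Z ω) * D0 ω)
    (hCI1 : μ⟦D1 ⁻¹' {0} ∩ Z ⁻¹' {1} | m⟧ =ᵐ[μ]
      fun ω => (μ⟦D1 ⁻¹' {0} | m⟧) ω * (μ⟦Z ⁻¹' {1} | m⟧) ω)
    (hCI0 : μ⟦D0 ⁻¹' {1} ∩ Z ⁻¹' {0} | m⟧ =ᵐ[μ]
      fun ω => (μ⟦D0 ⁻¹' {1} | m⟧) ω * (μ⟦Z ⁻¹' {0} | m⟧) ω)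
    {g p : Ω → ℝ} (hg : StronglyMeasurable[m] g) {C : ℝ} (hgC : ∀ᵐ ω ∂μ, |g ω| ≤ C)
    (hp : StronglyMeasurable[m] p) {ε : ℝ} (hε : 0 < ε)
    (hpε : ∀ᵐ ω ∂μ, ε ≤ p ω ∧ p ω ≤ 1 - ε) (hZp : μ[Z | m] =ᵐ[μ] p) :
    ∫ ω, (1 - (1 - D ω) * Z ω / p ω - D ω * (1 - Z ω) / (1 - p ω)) * g ω ∂μ
      = ∫ ω, g ω ∂μ - ∫ ω in D1 ⁻¹' {0}, g ω ∂μ - ∫ ω in D0 ⁻¹' {1}, g ω ∂μ := by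
  have hA1 := (hD1 (measurableSet_singleton 0)).inter (hZ (measurableSet_singleton 1))
  have hA0 := (hD0 (measurableSet_singleton 1)).inter (hZ (measurableSet_singleton 0))
  have hp1 : ∀ᵐ ω ∂μ, ε ≤ p ω := hpε.mono fun ω h => h.1
  have hp0 : ∀ᵐ ω ∂μ, ε ≤ 1 - p ω := hpε.mono fun ω h => by linarith [h.2]
  have h1p : StronglyMeasurable[m] fun ω => 1 - p ω := stronglyMeasurable_const.sub hp
  have hgi : Integrable g μ := Integrable.of_bound (hg.mono hm).aestronglyMeasurable C hgC
  have hint1 := integrable_div_of_bound (hg.mono hm).aestronglyMeasurable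
    (hp.mono hm).aestronglyMeasurable hgC hε hp1
  have hint0 := integrable_div_of_bound (hg.mono hm).aestronglyMeasurable
    (h1p.mono hm).aestronglyMeasurable hgC hε hp0
  have treated := setIntegral_inter_div_eq hm (hD1 (measurableSet_singleton 0))
    (hZ (measurableSet_singleton 1)) hCI1 hg hgC hp hε hp1
    (by rw [indicator_preimage_one_of_zero_or_one hZval]; exact hZp)
  have untreated := setIntegral_inter_div_eq hm (hD0 (measurableSet_singleton 1))
    (hZ (measurableSet_singleton 0)) hCI0 hg hgC h1p hε hp0
    ((condExp_indicator_preimage_zero hm hZ hZval).trans (hZp.mono fun ω h => by simp only [h]))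
  rw [integral_congr_ae (ae_of_all μ (kappa_mul_eq_sub_indicator hZval hD0val hD1val hD g p)),
    integral_sub (f := fun ω => g ω - _) (hgi.sub (hint1.indicator hA1)) (hint0.indicator hA0),
    integral_sub hgi (hint1.indicator hA1), integral_indicator hA1, integral_indicator hA0,
    treated, untreated]

/-- Abadie's κ-weighting theorem: under the local treatment effect assumptions, for every
bounded measurable `f`, `E[κ·f(X)] = ℙ(C)·E[f(X)|C]`, where `C = {D(1)=1, D(0)=0}` is the
complier event and `κ = 1 − (1−D)Z/q(X) − D(1−Z)/(1−q(X))`. -/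
theorem statement10 {Ω : Type*} [MeasurableSpace Ω] [StandardBorelSpace Ω]
    (μ : Measure Ω) [IsProbabilityMeasure μ]
    {k : ℕ} (Z D0 D1 D Y0 Y1 : Ω → ℝ) (X : Ω → Fin k → ℝ) (q : (Fin k → ℝ) → ℝ) (ε : ℝ)
    (hZ : Measurable Z) (hD0 : Measurable D0) (hD1 : Measurable D1)
    (hY0 : Measurable Y0) (hY1 : Measurable Y1) (hX : Measurable X) (hq : Measurable q)
    (hZval : ∀ ω, Z ω = 0 ∨ Z ω = 1) (hD0val : ∀ ω, D0 ω = 0 ∨ D0 ω = 1)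
    (hD1val : ∀ ω, D1 ω = 0 ∨ D1 ω = 1)
    (hD : ∀ ω, D ω = Z ω * D1 ω + (1 - Z ω) * D0 ω)
    (hci : CondIndepFun (MeasurableSpace.comap X inferInstance) hX.comap_le
      (fun ω => (Y0 ω, Y1 ω, D0 ω, D1 ω)) Z μ)
    (hmono : ∀ᵐ ω ∂μ, D0 ω ≤ D1 ω)
    (hε : 0 < ε) (hqb : ∀ᵐ ω ∂μ, ε ≤ q (X ω) ∧ q (X ω) ≤ 1 - ε)
    (hqcond : μ[Z | MeasurableSpace.comap X inferInstance] =ᵐ[μ] fun ω => q (X ω)) :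
    ∀ f : (Fin k → ℝ) → ℝ, Measurable f → (∃ C, ∀ x, |f x| ≤ C) →
      ∫ ω, (1 - (1 - D ω) * Z ω / q (X ω) - D ω * (1 - Z ω) / (1 - q (X ω))) * f (X ω) ∂μ
        = (μ {ω | D1 ω = 1 ∧ D0 ω = 0}).toReal *
            ∫ ω, f (X ω) ∂(μ[|{ω | D1 ω = 1 ∧ D0 ω = 0}]) := by
  rintro f hf ⟨C, hC⟩
  have hXm := comap_measurable (m := inferInstance) X
  have hCI := (condIndepFun_iff_condExp_inter_preimage_eq_mul
    (hY0.prodMk (hY1.prodMk (hD0.prodMk hD1))) hZ).mp hci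
  have hfC : ∀ᵐ ω ∂μ, |f (X ω)| ≤ C := ae_of_all _ fun ω => hC _
  -- `D1 ⁻¹' {0}` and `D0 ⁻¹' {1}` are, definitionally, preimages under `(Y0, Y1, D0, D1)`.
  rw [integral_kappa_mul_eq (g := fun ω => f (X ω)) (p := fun ω => q (X ω)) hX.comap_le
      hZ hD0 hD1 hZval hD0val hD1val hD
      (hCI _ _ (measurable_snd.snd.snd (measurableSet_singleton 0)) (measurableSet_singleton 1))
      (hCI _ _ (measurable_snd.snd.fst (measurableSet_singleton 1)) (measurableSet_singleton 0))
      (hf.comp hXm).stronglyMeasurable hfC (hq.comp hXm).stronglyMeasurable hε hqb hqcond,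
    integral_sub_sub_eq_setIntegral_compliers (g := fun ω => f (X ω)) hD0 hD1 hD0val hD1val hmono
      (Integrable.of_bound (hf.comp hX).aestronglyMeasurable C hfC),
    setIntegral_eq_toReal_mul_integral_cond (measure_ne_top μ _)]
end

section
/- Under the local treatment effect assumptions, for every bounded measurable function f of X: E[ D·(Z/q(X) − (1−Z)/(1−q(X))) · f(X) ] = ℙ(C)·E[f(X)|C] and E[ (1−D)·(Z/q(X) − (1−Z)/(1−q(X))) · f(X) ] = −ℙ(C)·E[f(X)|C], where C is the complier event {D(1)=1, D(0)=0} and q(X) = ℙ(Z=1|X). -/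
open MeasureTheory ProbabilityTheory

section Aux

variable {Ω : Type*} [MeasurableSpace Ω] [StandardBorelSpace Ω]
    {μ : Measure Ω} [IsProbabilityMeasure μ]
    {k : ℕ} {Z D0 D1 : Ω → ℝ} {X : Ω → Fin k → ℝ} {q : (Fin k → ℝ) → ℝ}

lemma integrable_of_bdd' {h : Ω → ℝ} (hm : AEStronglyMeasurable h μ) {B : ℝ}
    (hb : ∀ᵐ ω ∂μ, |h ω| ≤ B) : Integrable h μ :=
  ⟨hm, HasFiniteIntegral.of_bounded (by simpa [Real.norm_eq_abs] using hb)⟩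

lemma ind_abs_le_one (S : Set Ω) (ω : Ω) : |Set.indicator S (fun _ => (1:ℝ)) ω| ≤ 1 := by
  by_cases h : ω ∈ S <;> simp [Set.indicator_apply, h]

lemma key_balance
    (hZ : Measurable Z) (hD0 : Measurable D0) (hD1 : Measurable D1)
    (hX : Measurable X) (hq : Measurable q)
    (hZval : ∀ ω, Z ω = 0 ∨ Z ω = 1)
    (hci : CondIndepFun (MeasurableSpace.comap X inferInstance) hX.comap_le
      (fun ω => (D0 ω, D1 ω)) Z μ)
    (hqcond : μ[Z | MeasurableSpace.comap X inferInstance] =ᵐ[μ] fun ω => q (X ω))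
    (hqbd : ∀ᵐ ω ∂μ, |q (X ω)| ≤ 1)
    (s : Set (ℝ × ℝ)) (hs : MeasurableSet s)
    (ψ : (Fin k → ℝ) → ℝ) (hψ : Measurable ψ) (B : ℝ) (hψb : ∀ x, |ψ x| ≤ B) :
    ∫ ω, Set.indicator ((fun ω => (D0 ω, D1 ω)) ⁻¹' s) (fun _ => (1:ℝ)) ω * (Z ω * ψ (X ω)) ∂μ
      = ∫ ω, Set.indicator ((fun ω => (D0 ω, D1 ω)) ⁻¹' s) (fun _ => (1:ℝ)) ω
          * (q (X ω) * ψ (X ω)) ∂μ := by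
  have hm : MeasurableSpace.comap X inferInstance ≤ _ := hX.comap_le
  set A : Set Ω := (fun ω => (D0 ω, D1 ω)) ⁻¹' s with hAdef
  have hA : MeasurableSet A := (hD0.prodMk hD1) hs
  set Bs : Set Ω := Z ⁻¹' {1} with hBdef
  have hB : MeasurableSet Bs := hZ (measurableSet_singleton 1)
  have hB0 : 0 ≤ B := le_trans (abs_nonneg _) (hψb (fun _ => 0))
  have hψm : Measurable[MeasurableSpace.comap X inferInstance] (fun ω => ψ (X ω)) := fun t ht => ⟨ψ ⁻¹' t, hψ ht, rfl⟩
  have hqψm : Measurable[MeasurableSpace.comap X inferInstance] (fun ω => q (X ω) * ψ (X ω)) :=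
    fun t ht => ⟨(fun x => q x * ψ x) ⁻¹' t, (hq.mul hψ) ht, rfl⟩
  have hZind : Z = Set.indicator Bs (fun _ => (1:ℝ)) := by
    funext ω
    rcases hZval ω with h | h <;>
      simp [Set.indicator_apply, hBdef, Set.mem_preimage, h]
  -- integrability
  have intAB : Integrable (Set.indicator (A ∩ Bs) (fun _ => (1:ℝ))) μ :=
    integrable_of_bdd' ((measurable_const.indicator (hA.inter hB)).aestronglyMeasurable)
      (ae_of_all _ fun ω => ind_abs_le_one _ ω)
  have intA1 : Integrable (Set.indicator A (fun _ => (1:ℝ))) μ :=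
    integrable_of_bdd' ((measurable_const.indicator hA).aestronglyMeasurable)
      (ae_of_all _ fun ω => ind_abs_le_one _ ω)
  have intψAB : Integrable ((fun ω => ψ (X ω)) * Set.indicator (A ∩ Bs) (fun _ => (1:ℝ))) μ := by
    refine integrable_of_bdd' (((hψ.comp hX).aestronglyMeasurable).mul
      ((measurable_const.indicator (hA.inter hB)).aestronglyMeasurable))
      (B := B) (ae_of_all _ fun ω => ?_)
    rw [Pi.mul_apply, abs_mul]
    calc |ψ (X ω)| * |Set.indicator (A ∩ Bs) (fun _ => (1:ℝ)) ω| ≤ B * 1 :=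
          mul_le_mul (hψb _) (ind_abs_le_one _ _) (abs_nonneg _) hB0
      _ = B := mul_one B
  have intqψA : Integrable ((fun ω => q (X ω) * ψ (X ω)) * Set.indicator A (fun _ => (1:ℝ))) μ := by
    refine integrable_of_bdd' ((((hq.comp hX).mul (hψ.comp hX)).aestronglyMeasurable).mul
      ((measurable_const.indicator hA).aestronglyMeasurable))
      (B := B) ?_
    filter_upwards [hqbd] with ω hωq
    rw [Pi.mul_apply, abs_mul, abs_mul]
    calc |q (X ω)| * |ψ (X ω)| * |Set.indicator A (fun _ => (1:ℝ)) ω|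
        ≤ 1 * B * 1 := by
          refine mul_le_mul (mul_le_mul hωq (hψb _) (abs_nonneg _) zero_le_one)
            (ind_abs_le_one _ _) (abs_nonneg _) (by linarith)
      _ = B := by ring
  -- pull-out
  have pull1 : μ[(fun ω => ψ (X ω)) * Set.indicator (A ∩ Bs) (fun _ => (1:ℝ)) | MeasurableSpace.comap X inferInstance]
      =ᵐ[μ] (fun ω => ψ (X ω)) * μ[Set.indicator (A ∩ Bs) (fun _ => (1:ℝ)) | MeasurableSpace.comap X inferInstance] :=
    condExp_mul_of_stronglyMeasurable_left hψm.stronglyMeasurable intψAB intAB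
  have pull2 : μ[(fun ω => q (X ω) * ψ (X ω)) * Set.indicator A (fun _ => (1:ℝ)) | MeasurableSpace.comap X inferInstance]
      =ᵐ[μ] (fun ω => q (X ω) * ψ (X ω)) * μ[Set.indicator A (fun _ => (1:ℝ)) | MeasurableSpace.comap X inferInstance] :=
    condExp_mul_of_stronglyMeasurable_left hqψm.stronglyMeasurable intqψA intA1
  -- conditional independence
  have hprod := (condIndepFun_iff_condExp_inter_preimage_eq_mul
      (hD0.prodMk hD1) hZ).mp hci s {1} hs (measurableSet_singleton 1)
  have hqB : μ[Set.indicator Bs (fun _ => (1:ℝ)) | MeasurableSpace.comap X inferInstance] =ᵐ[μ] fun ω => q (X ω) := by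
    rw [← hZind]; exact hqcond
  have chain : μ[(fun ω => ψ (X ω)) * Set.indicator (A ∩ Bs) (fun _ => (1:ℝ)) | MeasurableSpace.comap X inferInstance]
      =ᵐ[μ] μ[(fun ω => q (X ω) * ψ (X ω)) * Set.indicator A (fun _ => (1:ℝ)) | MeasurableSpace.comap X inferInstance] := by
    filter_upwards [pull1, pull2, hprod, hqB] with ω h1 h2 h3 h4
    simp only [Pi.mul_apply] at h1 h2 h3 ⊢
    rw [h1, h2, h3, h4]
    ring
  calc ∫ ω, Set.indicator A (fun _ => (1:ℝ)) ω * (Z ω * ψ (X ω)) ∂μ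
      = ∫ ω, ((fun ω => ψ (X ω)) * Set.indicator (A ∩ Bs) (fun _ => (1:ℝ))) ω ∂μ := by
        refine integral_congr_ae (ae_of_all _ fun ω => ?_)
        rcases hZval ω with h | h <;> by_cases h1 : ω ∈ A <;>
          simp [Set.indicator_apply, Set.mem_inter_iff, h1, hBdef, Set.mem_preimage, h]
    _ = ∫ ω, (μ[(fun ω => ψ (X ω)) * Set.indicator (A ∩ Bs) (fun _ => (1:ℝ)) | MeasurableSpace.comap X inferInstance]) ω ∂μ :=
        (integral_condExp hm).symm
    _ = ∫ ω, (μ[(fun ω => q (X ω) * ψ (X ω)) * Set.indicator A (fun _ => (1:ℝ)) | MeasurableSpace.comap X inferInstance]) ω ∂μ :=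
        integral_congr_ae chain
    _ = ∫ ω, ((fun ω => q (X ω) * ψ (X ω)) * Set.indicator A (fun _ => (1:ℝ))) ω ∂μ :=
        integral_condExp hm
    _ = ∫ ω, Set.indicator A (fun _ => (1:ℝ)) ω * (q (X ω) * ψ (X ω)) ∂μ := by
        refine integral_congr_ae (ae_of_all _ fun ω => ?_)
        simp only [Pi.mul_apply]; ring

end Aux

section Main

variable {Ω : Type*} [MeasurableSpace Ω] [StandardBorelSpace Ω]
    {μ : Measure Ω} [IsProbabilityMeasure μ]
    {k : ℕ} {Z D0 D1 : Ω → ℝ} {X : Ω → Fin k → ℝ} {q : (Fin k → ℝ) → ℝ}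

lemma key_balanceC
    (hZ : Measurable Z) (hD0 : Measurable D0) (hD1 : Measurable D1)
    (hX : Measurable X) (hq : Measurable q)
    (hZval : ∀ ω, Z ω = 0 ∨ Z ω = 1)
    (hci : CondIndepFun (MeasurableSpace.comap X inferInstance) hX.comap_le
      (fun ω => (D0 ω, D1 ω)) Z μ)
    (hqcond : μ[Z | MeasurableSpace.comap X inferInstance] =ᵐ[μ] fun ω => q (X ω))
    (hqbd : ∀ᵐ ω ∂μ, |q (X ω)| ≤ 1)
    (s : Set (ℝ × ℝ)) (hs : MeasurableSet s)
    (ψ : (Fin k → ℝ) → ℝ) (hψ : Measurable ψ) (B : ℝ) (hψb : ∀ x, |ψ x| ≤ B) :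
    ∫ ω, Set.indicator ((fun ω => (D0 ω, D1 ω)) ⁻¹' s) (fun _ => (1:ℝ)) ω
        * ((1 - Z ω) * ψ (X ω)) ∂μ
      = ∫ ω, Set.indicator ((fun ω => (D0 ω, D1 ω)) ⁻¹' s) (fun _ => (1:ℝ)) ω
          * ((1 - q (X ω)) * ψ (X ω)) ∂μ := by
  have hB0 : 0 ≤ B := le_trans (abs_nonneg _) (hψb (fun _ => 0))
  set A : Set Ω := (fun ω => (D0 ω, D1 ω)) ⁻¹' s with hAdef
  have hA : MeasurableSet A := (hD0.prodMk hD1) hs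
  have hZabs : ∀ ω, |Z ω| ≤ 1 := by
    intro ω; rcases hZval ω with h | h <;> rw [h] <;> norm_num
  have intH : ∀ (g : Ω → ℝ), Measurable g → ∀ (Bb : ℝ), (∀ᵐ ω ∂μ, |g ω| ≤ Bb) →
      Integrable (fun ω => Set.indicator A (fun _ => (1:ℝ)) ω * g ω) μ := by
    intro g hg Bb hgb
    refine integrable_of_bdd' (((measurable_const.indicator hA).mul hg).aestronglyMeasurable)
      (B := Bb) ?_
    filter_upwards [hgb] with ω h
    rw [abs_mul]
    calc |Set.indicator A (fun _ => (1:ℝ)) ω| * |g ω| ≤ 1 * Bb :=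
        mul_le_mul (ind_abs_le_one _ _) h (abs_nonneg _) zero_le_one
      _ = Bb := one_mul _
  have i1 : Integrable (fun ω => Set.indicator A (fun _ => (1:ℝ)) ω * ψ (X ω)) μ :=
    intH _ (hψ.comp hX) B (ae_of_all _ fun ω => hψb _)
  have i2 : Integrable (fun ω => Set.indicator A (fun _ => (1:ℝ)) ω * (Z ω * ψ (X ω))) μ := by
    refine intH _ (hZ.mul (hψ.comp hX)) B (ae_of_all _ fun ω => ?_)
    rw [abs_mul]
    calc |Z ω| * |ψ (X ω)| ≤ 1 * B := mul_le_mul (hZabs ω) (hψb _) (abs_nonneg _) zero_le_one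
      _ = B := one_mul _
  have i3 : Integrable (fun ω => Set.indicator A (fun _ => (1:ℝ)) ω * (q (X ω) * ψ (X ω))) μ := by
    refine intH _ ((hq.comp hX).mul (hψ.comp hX)) B ?_
    filter_upwards [hqbd] with ω h
    rw [abs_mul]
    calc |q (X ω)| * |ψ (X ω)| ≤ 1 * B := mul_le_mul h (hψb _) (abs_nonneg _) zero_le_one
      _ = B := one_mul _
  have hkey := key_balance hZ hD0 hD1 hX hq hZval hci hqcond hqbd s hs ψ hψ B hψb
  calc ∫ ω, Set.indicator A (fun _ => (1:ℝ)) ω * ((1 - Z ω) * ψ (X ω)) ∂μ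
      = ∫ ω, (Set.indicator A (fun _ => (1:ℝ)) ω * ψ (X ω)
          - Set.indicator A (fun _ => (1:ℝ)) ω * (Z ω * ψ (X ω))) ∂μ := by
        refine integral_congr_ae (ae_of_all _ fun ω => ?_); ring
    _ = (∫ ω, Set.indicator A (fun _ => (1:ℝ)) ω * ψ (X ω) ∂μ)
        - ∫ ω, Set.indicator A (fun _ => (1:ℝ)) ω * (Z ω * ψ (X ω)) ∂μ := integral_sub i1 i2
    _ = (∫ ω, Set.indicator A (fun _ => (1:ℝ)) ω * ψ (X ω) ∂μ)
        - ∫ ω, Set.indicator A (fun _ => (1:ℝ)) ω * (q (X ω) * ψ (X ω)) ∂μ := by rw [hkey]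
    _ = ∫ ω, (Set.indicator A (fun _ => (1:ℝ)) ω * ψ (X ω)
          - Set.indicator A (fun _ => (1:ℝ)) ω * (q (X ω) * ψ (X ω))) ∂μ := (integral_sub i1 i3).symm
    _ = ∫ ω, Set.indicator A (fun _ => (1:ℝ)) ω * ((1 - q (X ω)) * ψ (X ω)) ∂μ := by
        refine integral_congr_ae (ae_of_all _ fun ω => ?_); ring

end Main

/-- Treated-complier and untreated-complier balancing identities: weighting by
`1{D=d}(Z/q(X) − (1−Z)/(1−q(X)))` identifies (signed) complier expectations:
`E[D(Z/q − (1−Z)/(1−q))f(X)] = ℙ(C)E[f(X)|C]` and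
`E[(1−D)(Z/q − (1−Z)/(1−q))f(X)] = −ℙ(C)E[f(X)|C]`. -/
theorem statement11 {Ω : Type*} [MeasurableSpace Ω] [StandardBorelSpace Ω]
    (μ : Measure Ω) [IsProbabilityMeasure μ]
    {k : ℕ} (Z D0 D1 D : Ω → ℝ) (X : Ω → Fin k → ℝ) (q : (Fin k → ℝ) → ℝ) (ε : ℝ)
    (hZ : Measurable Z) (hD0 : Measurable D0) (hD1 : Measurable D1)
    (hX : Measurable X) (hq : Measurable q)
    (hZval : ∀ ω, Z ω = 0 ∨ Z ω = 1) (hD0val : ∀ ω, D0 ω = 0 ∨ D0 ω = 1)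
    (hD1val : ∀ ω, D1 ω = 0 ∨ D1 ω = 1)
    (hD : ∀ ω, D ω = Z ω * D1 ω + (1 - Z ω) * D0 ω)
    (hci : CondIndepFun (MeasurableSpace.comap X inferInstance) hX.comap_le
      (fun ω => (D0 ω, D1 ω)) Z μ)
    (hmono : ∀ᵐ ω ∂μ, D0 ω ≤ D1 ω)
    (hε : 0 < ε) (hqb : ∀ᵐ ω ∂μ, ε ≤ q (X ω) ∧ q (X ω) ≤ 1 - ε)
    (hqcond : μ[Z | MeasurableSpace.comap X inferInstance] =ᵐ[μ] fun ω => q (X ω)) :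
    ∀ f : (Fin k → ℝ) → ℝ, Measurable f → (∃ C, ∀ x, |f x| ≤ C) →
      (∫ ω, D ω * (Z ω / q (X ω) - (1 - Z ω) / (1 - q (X ω))) * f (X ω) ∂μ
        = (μ {ω | D1 ω = 1 ∧ D0 ω = 0}).toReal *
            ∫ ω, f (X ω) ∂(μ[|{ω | D1 ω = 1 ∧ D0 ω = 0}])) ∧
      (∫ ω, (1 - D ω) * (Z ω / q (X ω) - (1 - Z ω) / (1 - q (X ω))) * f (X ω) ∂μ
        = -((μ {ω | D1 ω = 1 ∧ D0 ω = 0}).toReal *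
            ∫ ω, f (X ω) ∂(μ[|{ω | D1 ω = 1 ∧ D0 ω = 0}]))) := by
  intro f hf hfb
  obtain ⟨Cb, hCb⟩ := hfb
  have hCb0 : 0 ≤ Cb := le_trans (abs_nonneg _) (hCb (fun _ => 0))
  have hqbd : ∀ᵐ ω ∂μ, |q (X ω)| ≤ 1 := by
    filter_upwards [hqb] with ω ⟨h1, h2⟩
    rw [abs_le]; constructor <;> linarith
  have hZabs : ∀ ω, |Z ω| ≤ 1 := by
    intro ω; rcases hZval ω with h | h <;> rw [h] <;> norm_num
  -- bounded clipped weight functions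
  have hmq : Measurable (fun x => f x / max (q x) ε) := hf.div (hq.max measurable_const)
  have hm1 : Measurable (fun x => f x / max (1 - q x) ε) :=
    hf.div ((measurable_const.sub hq).max measurable_const)
  have hbq : ∀ x, |f x / max (q x) ε| ≤ Cb / ε := by
    intro x
    rw [abs_div]
    exact div_le_div₀ hCb0 (hCb x) hε (le_trans (le_max_right _ _) (le_abs_self _))
  have hb1 : ∀ x, |f x / max (1 - q x) ε| ≤ Cb / ε := by
    intro x
    rw [abs_div]
    exact div_le_div₀ hCb0 (hCb x) hε (le_trans (le_max_right _ _) (le_abs_self _))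
  -- the four indicator sets
  set A1 : Set Ω := (fun ω => (D0 ω, D1 ω)) ⁻¹' ((Set.univ : Set ℝ) ×ˢ ({1} : Set ℝ)) with hA1def
  set B1 : Set Ω := (fun ω => (D0 ω, D1 ω)) ⁻¹' (({1} : Set ℝ) ×ˢ (Set.univ : Set ℝ)) with hB1def
  set A0 : Set Ω := (fun ω => (D0 ω, D1 ω)) ⁻¹' ((Set.univ : Set ℝ) ×ˢ ({0} : Set ℝ)) with hA0def
  set B0 : Set Ω := (fun ω => (D0 ω, D1 ω)) ⁻¹' (({0} : Set ℝ) ×ˢ (Set.univ : Set ℝ)) with hB0def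
  set Cset : Set Ω := {ω | D1 ω = 1 ∧ D0 ω = 0} with hCsetdef
  have hCmeas : MeasurableSet Cset := by
    have h : Cset = D1 ⁻¹' {1} ∩ D0 ⁻¹' {0} := by
      ext ω; simp [hCsetdef, Set.mem_setOf_eq]
    rw [h]
    exact (hD1 (measurableSet_singleton 1)).inter (hD0 (measurableSet_singleton 0))
  -- integrability helper
  have intH : ∀ (S : Set Ω), MeasurableSet S → ∀ (g : Ω → ℝ), Measurable g →
      ∀ (Bb : ℝ), (∀ᵐ ω ∂μ, |g ω| ≤ Bb) →
      Integrable (fun ω => Set.indicator S (fun _ => (1:ℝ)) ω * g ω) μ := by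
    intro S hS g hg Bb hgb
    refine integrable_of_bdd' (((measurable_const.indicator hS).mul hg).aestronglyMeasurable)
      (B := Bb) ?_
    filter_upwards [hgb] with ω h
    rw [abs_mul]
    calc |Set.indicator S (fun _ => (1:ℝ)) ω| * |g ω| ≤ 1 * Bb :=
        mul_le_mul (ind_abs_le_one _ _) h (abs_nonneg _) zero_le_one
      _ = Bb := one_mul _
  have hA1m : MeasurableSet ((Set.univ : Set ℝ) ×ˢ ({1} : Set ℝ)) :=
    MeasurableSet.univ.prod (measurableSet_singleton 1)
  have hB1m : MeasurableSet (({1} : Set ℝ) ×ˢ (Set.univ : Set ℝ)) :=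
    (measurableSet_singleton 1).prod MeasurableSet.univ
  have hA0m : MeasurableSet ((Set.univ : Set ℝ) ×ˢ ({0} : Set ℝ)) :=
    MeasurableSet.univ.prod (measurableSet_singleton 0)
  have hB0m : MeasurableSet (({0} : Set ℝ) ×ˢ (Set.univ : Set ℝ)) :=
    (measurableSet_singleton 0).prod MeasurableSet.univ
  -- final step: indicator of Cset integrates to conditional expectation
  have hfinal : ∫ ω, Set.indicator Cset (fun _ => (1:ℝ)) ω * f (X ω) ∂μ
      = (μ Cset).toReal * ∫ ω, f (X ω) ∂(μ[|Cset]) := by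
    have hfs : ∀ ω, Set.indicator Cset (fun _ => (1:ℝ)) ω * f (X ω)
        = Set.indicator Cset (fun ω => f (X ω)) ω := by
      intro ω; by_cases h : ω ∈ Cset <;> simp [h]
    rw [integral_congr_ae (ae_of_all _ hfs), integral_indicator hCmeas]
    rw [ProbabilityTheory.cond, integral_smul_measure, ENNReal.toReal_inv, smul_eq_mul]
    rcases eq_or_ne (μ Cset) 0 with hz | hz
    · rw [Measure.restrict_eq_zero.mpr hz]; simp
    · rw [← mul_assoc, mul_inv_cancel₀ (ENNReal.toReal_ne_zero.mpr ⟨hz, measure_ne_top μ _⟩),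
        one_mul]
  -- key balance applications, simplified to f
  have R1 : ∫ ω, Set.indicator A1 (fun _ => (1:ℝ)) ω
        * (q (X ω) * (f (X ω) / max (q (X ω)) ε)) ∂μ
      = ∫ ω, Set.indicator A1 (fun _ => (1:ℝ)) ω * f (X ω) ∂μ := by
    refine integral_congr_ae ?_
    filter_upwards [hqb] with ω ⟨h1, h2⟩
    rw [max_eq_left h1, mul_comm (q (X ω)),
      div_mul_cancel₀ _ (ne_of_gt (lt_of_lt_of_le hε h1))]
  have R0 : ∫ ω, Set.indicator A0 (fun _ => (1:ℝ)) ω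
        * (q (X ω) * (f (X ω) / max (q (X ω)) ε)) ∂μ
      = ∫ ω, Set.indicator A0 (fun _ => (1:ℝ)) ω * f (X ω) ∂μ := by
    refine integral_congr_ae ?_
    filter_upwards [hqb] with ω ⟨h1, h2⟩
    rw [max_eq_left h1, mul_comm (q (X ω)),
      div_mul_cancel₀ _ (ne_of_gt (lt_of_lt_of_le hε h1))]
  have S1 : ∫ ω, Set.indicator B1 (fun _ => (1:ℝ)) ω
        * ((1 - q (X ω)) * (f (X ω) / max (1 - q (X ω)) ε)) ∂μ
      = ∫ ω, Set.indicator B1 (fun _ => (1:ℝ)) ω * f (X ω) ∂μ := by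
    refine integral_congr_ae ?_
    filter_upwards [hqb] with ω ⟨h1, h2⟩
    rw [max_eq_left (by linarith), mul_comm (1 - q (X ω)),
      div_mul_cancel₀ _ (ne_of_gt (by linarith : (0:ℝ) < 1 - q (X ω)))]
  have S0 : ∫ ω, Set.indicator B0 (fun _ => (1:ℝ)) ω
        * ((1 - q (X ω)) * (f (X ω) / max (1 - q (X ω)) ε)) ∂μ
      = ∫ ω, Set.indicator B0 (fun _ => (1:ℝ)) ω * f (X ω) ∂μ := by
    refine integral_congr_ae ?_
    filter_upwards [hqb] with ω ⟨h1, h2⟩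
    rw [max_eq_left (by linarith), mul_comm (1 - q (X ω)),
      div_mul_cancel₀ _ (ne_of_gt (by linarith : (0:ℝ) < 1 - q (X ω)))]
  have K1 : ∫ ω, Set.indicator A1 (fun _ => (1:ℝ)) ω
        * (Z ω * (f (X ω) / max (q (X ω)) ε)) ∂μ
      = ∫ ω, Set.indicator A1 (fun _ => (1:ℝ)) ω * f (X ω) ∂μ :=
    (key_balance hZ hD0 hD1 hX hq hZval hci hqcond hqbd _ hA1m _ hmq (Cb/ε) hbq).trans R1
  have K0 : ∫ ω, Set.indicator A0 (fun _ => (1:ℝ)) ω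
        * (Z ω * (f (X ω) / max (q (X ω)) ε)) ∂μ
      = ∫ ω, Set.indicator A0 (fun _ => (1:ℝ)) ω * f (X ω) ∂μ :=
    (key_balance hZ hD0 hD1 hX hq hZval hci hqcond hqbd _ hA0m _ hmq (Cb/ε) hbq).trans R0
  have L1 : ∫ ω, Set.indicator B1 (fun _ => (1:ℝ)) ω
        * ((1 - Z ω) * (f (X ω) / max (1 - q (X ω)) ε)) ∂μ
      = ∫ ω, Set.indicator B1 (fun _ => (1:ℝ)) ω * f (X ω) ∂μ :=
    (key_balanceC hZ hD0 hD1 hX hq hZval hci hqcond hqbd _ hB1m _ hm1 (Cb/ε) hb1).trans S1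
  have L0 : ∫ ω, Set.indicator B0 (fun _ => (1:ℝ)) ω
        * ((1 - Z ω) * (f (X ω) / max (1 - q (X ω)) ε)) ∂μ
      = ∫ ω, Set.indicator B0 (fun _ => (1:ℝ)) ω * f (X ω) ∂μ :=
    (key_balanceC hZ hD0 hD1 hX hq hZval hci hqcond hqbd _ hB0m _ hm1 (Cb/ε) hb1).trans S0
  -- integrability of the pieces
  have iZq : ∀ (S : Set Ω), MeasurableSet S →
      Integrable (fun ω => Set.indicator S (fun _ => (1:ℝ)) ω
        * (Z ω * (f (X ω) / max (q (X ω)) ε))) μ := by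
    intro S hS
    refine intH S hS _ (hZ.mul (hmq.comp hX)) (Cb/ε) (ae_of_all _ fun ω => ?_)
    rw [abs_mul]
    calc |Z ω| * |f (X ω) / max (q (X ω)) ε| ≤ 1 * (Cb/ε) :=
        mul_le_mul (hZabs ω) (hbq _) (abs_nonneg _) zero_le_one
      _ = Cb/ε := one_mul _
  have iZ1 : ∀ (S : Set Ω), MeasurableSet S →
      Integrable (fun ω => Set.indicator S (fun _ => (1:ℝ)) ω
        * ((1 - Z ω) * (f (X ω) / max (1 - q (X ω)) ε))) μ := by
    intro S hS
    refine intH S hS _ ((measurable_const.sub hZ).mul (hm1.comp hX)) (Cb/ε)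
      (ae_of_all _ fun ω => ?_)
    rw [abs_mul]
    have h1Z : |1 - Z ω| ≤ 1 := by
      rcases hZval ω with h | h <;> rw [h] <;> norm_num
    calc |1 - Z ω| * |f (X ω) / max (1 - q (X ω)) ε| ≤ 1 * (Cb/ε) :=
        mul_le_mul h1Z (hb1 _) (abs_nonneg _) zero_le_one
      _ = Cb/ε := one_mul _
  have iF : ∀ (S : Set Ω), MeasurableSet S →
      Integrable (fun ω => Set.indicator S (fun _ => (1:ℝ)) ω * f (X ω)) μ := by
    intro S hS
    exact intH S hS _ (hf.comp hX) Cb (ae_of_all _ fun ω => hCb _)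
  constructor
  · -- first conjunct
    have e1 : ∀ᵐ ω ∂μ, D ω * (Z ω / q (X ω) - (1 - Z ω) / (1 - q (X ω))) * f (X ω)
        = Set.indicator A1 (fun _ => (1:ℝ)) ω * (Z ω * (f (X ω) / max (q (X ω)) ε))
          - Set.indicator B1 (fun _ => (1:ℝ)) ω
            * ((1 - Z ω) * (f (X ω) / max (1 - q (X ω)) ε)) := by
      filter_upwards [hqb] with ω ⟨h1, h2⟩
      have hne1 : q (X ω) ≠ 0 := ne_of_gt (lt_of_lt_of_le hε h1)
      have hne2 : 1 - q (X ω) ≠ 0 := ne_of_gt (by linarith)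
      have hiA : Set.indicator A1 (fun _ => (1:ℝ)) ω = D1 ω := by
        rcases hD1val ω with h | h <;>
          simp [Set.indicator_apply, hA1def, Set.mem_preimage, Set.mem_prod, h]
      have hiB : Set.indicator B1 (fun _ => (1:ℝ)) ω = D0 ω := by
        rcases hD0val ω with h | h <;>
          simp [Set.indicator_apply, hB1def, Set.mem_preimage, Set.mem_prod, h]
      rw [hiA, hiB, hD ω, max_eq_left h1, max_eq_left (by linarith : ε ≤ 1 - q (X ω))]
      rcases hZval ω with h | h <;> rw [h] <;> field_simp <;> ring
    calc ∫ ω, D ω * (Z ω / q (X ω) - (1 - Z ω) / (1 - q (X ω))) * f (X ω) ∂μ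
        = ∫ ω, (Set.indicator A1 (fun _ => (1:ℝ)) ω * (Z ω * (f (X ω) / max (q (X ω)) ε))
            - Set.indicator B1 (fun _ => (1:ℝ)) ω
              * ((1 - Z ω) * (f (X ω) / max (1 - q (X ω)) ε))) ∂μ := integral_congr_ae e1
      _ = (∫ ω, Set.indicator A1 (fun _ => (1:ℝ)) ω
              * (Z ω * (f (X ω) / max (q (X ω)) ε)) ∂μ)
          - ∫ ω, Set.indicator B1 (fun _ => (1:ℝ)) ω
              * ((1 - Z ω) * (f (X ω) / max (1 - q (X ω)) ε)) ∂μ :=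
          integral_sub (iZq _ ((hD0.prodMk hD1) hA1m)) (iZ1 _ ((hD0.prodMk hD1) hB1m))
      _ = (∫ ω, Set.indicator A1 (fun _ => (1:ℝ)) ω * f (X ω) ∂μ)
          - ∫ ω, Set.indicator B1 (fun _ => (1:ℝ)) ω * f (X ω) ∂μ := by rw [K1, L1]
      _ = ∫ ω, (Set.indicator A1 (fun _ => (1:ℝ)) ω * f (X ω)
            - Set.indicator B1 (fun _ => (1:ℝ)) ω * f (X ω)) ∂μ :=
          (integral_sub (iF _ ((hD0.prodMk hD1) hA1m)) (iF _ ((hD0.prodMk hD1) hB1m))).symm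
      _ = ∫ ω, Set.indicator Cset (fun _ => (1:ℝ)) ω * f (X ω) ∂μ := by
          refine integral_congr_ae ?_
          filter_upwards [hmono] with ω hm01
          rcases hD1val ω with h1 | h1 <;> rcases hD0val ω with h0 | h0 <;>
            simp [Set.indicator_apply, hA1def, hB1def, hCsetdef, Set.mem_preimage,
              Set.mem_prod, Set.mem_setOf_eq, h1, h0] <;>
            first
              | ring1
              | (exfalso; rw [h1, h0] at hm01; linarith)
      _ = (μ Cset).toReal * ∫ ω, f (X ω) ∂(μ[|Cset]) := hfinal
  · -- second conjunct
    have e2 : ∀ᵐ ω ∂μ, (1 - D ω) * (Z ω / q (X ω) - (1 - Z ω) / (1 - q (X ω))) * f (X ω)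
        = Set.indicator A0 (fun _ => (1:ℝ)) ω * (Z ω * (f (X ω) / max (q (X ω)) ε))
          - Set.indicator B0 (fun _ => (1:ℝ)) ω
            * ((1 - Z ω) * (f (X ω) / max (1 - q (X ω)) ε)) := by
      filter_upwards [hqb] with ω ⟨h1, h2⟩
      have hne1 : q (X ω) ≠ 0 := ne_of_gt (lt_of_lt_of_le hε h1)
      have hne2 : 1 - q (X ω) ≠ 0 := ne_of_gt (by linarith)
      have hiA : Set.indicator A0 (fun _ => (1:ℝ)) ω = 1 - D1 ω := by
        rcases hD1val ω with h | h <;>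
          simp [Set.indicator_apply, hA0def, Set.mem_preimage, Set.mem_prod, h]
      have hiB : Set.indicator B0 (fun _ => (1:ℝ)) ω = 1 - D0 ω := by
        rcases hD0val ω with h | h <;>
          simp [Set.indicator_apply, hB0def, Set.mem_preimage, Set.mem_prod, h]
      rw [hiA, hiB, hD ω, max_eq_left h1, max_eq_left (by linarith : ε ≤ 1 - q (X ω))]
      rcases hZval ω with h | h <;> rw [h] <;> field_simp <;> ring
    calc ∫ ω, (1 - D ω) * (Z ω / q (X ω) - (1 - Z ω) / (1 - q (X ω))) * f (X ω) ∂μ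
        = ∫ ω, (Set.indicator A0 (fun _ => (1:ℝ)) ω * (Z ω * (f (X ω) / max (q (X ω)) ε))
            - Set.indicator B0 (fun _ => (1:ℝ)) ω
              * ((1 - Z ω) * (f (X ω) / max (1 - q (X ω)) ε))) ∂μ := integral_congr_ae e2
      _ = (∫ ω, Set.indicator A0 (fun _ => (1:ℝ)) ω
              * (Z ω * (f (X ω) / max (q (X ω)) ε)) ∂μ)
          - ∫ ω, Set.indicator B0 (fun _ => (1:ℝ)) ω
              * ((1 - Z ω) * (f (X ω) / max (1 - q (X ω)) ε)) ∂μ :=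
          integral_sub (iZq _ ((hD0.prodMk hD1) hA0m)) (iZ1 _ ((hD0.prodMk hD1) hB0m))
      _ = (∫ ω, Set.indicator A0 (fun _ => (1:ℝ)) ω * f (X ω) ∂μ)
          - ∫ ω, Set.indicator B0 (fun _ => (1:ℝ)) ω * f (X ω) ∂μ := by rw [K0, L0]
      _ = ∫ ω, (Set.indicator A0 (fun _ => (1:ℝ)) ω * f (X ω)
            - Set.indicator B0 (fun _ => (1:ℝ)) ω * f (X ω)) ∂μ :=
          (integral_sub (iF _ ((hD0.prodMk hD1) hA0m)) (iF _ ((hD0.prodMk hD1) hB0m))).symm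
      _ = ∫ ω, -(Set.indicator Cset (fun _ => (1:ℝ)) ω * f (X ω)) ∂μ := by
          refine integral_congr_ae ?_
          filter_upwards [hmono] with ω hm01
          rcases hD1val ω with h1 | h1 <;> rcases hD0val ω with h0 | h0 <;>
            simp [Set.indicator_apply, hA0def, hB0def, hCsetdef, Set.mem_preimage,
              Set.mem_prod, Set.mem_setOf_eq, h1, h0] <;>
            first
              | ring1
              | (exfalso; rw [h1, h0] at hm01; linarith)
      _ = -(∫ ω, Set.indicator Cset (fun _ => (1:ℝ)) ω * f (X ω) ∂μ) := integral_neg _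
      _ = -((μ Cset).toReal * ∫ ω, f (X ω) ∂(μ[|Cset])) := by rw [hfinal]
end

section
/- Let κ(D,Z,X) = 1 − (1−D)Z/q(X) − D(1−Z)/(1−q(X)) with q(X) = ℙ(Z=1|X) ∈ [ε, 1−ε] a.s. Under the LTE assumptions (Z ⫫ (D(0),D(1)) | X, D = ZD(1)+(1−Z)D(0), monotonicity ℙ(D(1) ≥ D(0)|X)=1 a.s.), the conditional expectation satisfies E[κ(D,Z,X) | X, D(1), D(0)] = 1{D(1)=1, D(0)=0} almost surely; in particular κ has conditional expectation given (X, compliance type) equal to the complier indicator. -/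
open MeasureTheory ProbabilityTheory
open scoped Classical

/-!
Conditional independence of `Z` and `(D(1), D(0))` given `X` means that conditioning on the
potential treatments as well does not change `E[Z | X] = q(X)`; it suffices to compare set
integrals on the rectangles `X⁻¹' A ∩ (D(1), D(0))⁻¹' T`, a π-system generating
`σ(X, D(1), D(0))`. Because `D = Z D(1) + (1 - Z) D(0)`, the weight is affine in `Z`,
`κ = 1 - D(0)/(1-q) + (D(0)/(1-q) - (1-D(1))/q) Z`, with coefficients that are bounded
functions of `(X, D(1), D(0))` (this is where `ε ≤ q ≤ 1 - ε` enters). Taking conditional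
expectations replaces `Z` by `q(X)` and leaves `D(1) - D(0)`, which under monotonicity is the
complier indicator.
-/

section CondExp

variable {Ω : Type*} {m mΩ : MeasurableSpace Ω} {μ : Measure Ω} {f g : Ω → ℝ}

lemma setIntegral_inter_eq_setIntegral_condExp (hm : m ≤ mΩ) [SigmaFinite (μ.trim hm)]
    (hf : Integrable f μ) {s t : Set Ω} (hs : MeasurableSet[m] s) (ht : MeasurableSet t) :
    ∫ ω in s ∩ t, f ω ∂μ = ∫ ω in s, (μ[t.indicator f | m]) ω ∂μ := by
  rw [setIntegral_condExp hm (hf.indicator ht) hs, setIntegral_indicator ht]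

lemma setIntegral_eq_of_isPiSystem (hm : m ≤ mΩ) {S : Set (Set Ω)} (hgen : m = .generateFrom S)
    (hS : IsPiSystem S) (hf : Integrable f μ) (hg : Integrable g μ)
    (h_univ : ∫ ω, f ω ∂μ = ∫ ω, g ω ∂μ) (h_basic : ∀ s ∈ S, ∫ ω in s, f ω ∂μ = ∫ ω in s, g ω ∂μ)
    {s : Set Ω} (hs : MeasurableSet[m] s) : ∫ ω in s, f ω ∂μ = ∫ ω in s, g ω ∂μ := by
  induction s, hs using MeasurableSpace.induction_on_inter hgen hS with
  | empty => simp
  | basic s hs => exact h_basic s hs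
  | compl s hs ih =>
    have hf_split := integral_add_compl (hm s hs) hf
    have hg_split := integral_add_compl (hm s hs) hg
    linarith
  | iUnion s hdisj hs ih =>
    rw [integral_iUnion (fun i => hm _ (hs i)) hdisj hf.integrableOn,
      integral_iUnion (fun i => hm _ (hs i)) hdisj hg.integrableOn]
    exact tsum_congr ih

lemma integrable_of_forall_eq_zero_or_one [IsFiniteMeasure μ] {Z : Ω → ℝ} (hZ : Measurable Z)
    (hZval : ∀ ω, Z ω = 0 ∨ Z ω = 1) : Integrable Z μ :=
  .of_bound hZ.aestronglyMeasurable 1 <| ae_of_all _ fun ω => by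
    rcases hZval ω with h | h <;> simp [h]

lemma condExp_add_mul_of_bound (hm : m ≤ mΩ) [IsFiniteMeasure μ] {a b Z : Ω → ℝ}
    (ha : StronglyMeasurable[m] a) (hb : StronglyMeasurable[m] b) {ca cb : ℝ}
    (ha_bd : ∀ᵐ ω ∂μ, ‖a ω‖ ≤ ca) (hb_bd : ∀ᵐ ω ∂μ, ‖b ω‖ ≤ cb) (hZ : Integrable Z μ) :
    μ[a + b * Z | m] =ᵐ[μ] a + b * μ[Z | m] := by
  have ha_int : Integrable a μ := .of_bound (ha.mono hm).aestronglyMeasurable ca ha_bd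
  have hbZ_int : Integrable (b * Z) μ := hZ.bdd_mul (hb.mono hm).aestronglyMeasurable hb_bd
  filter_upwards [condExp_add ha_int hbZ_int m,
    condExp_stronglyMeasurable_mul_of_bound hm hb hZ cb hb_bd] with ω h_add h_mul
  rw [h_add, Pi.add_apply, condExp_of_stronglyMeasurable hm ha ha_int, h_mul, Pi.add_apply]

end CondExp

section Kappa

variable {z d d0 d1 t ε : ℝ}

lemma kappa_eq_add_mul (hz : z = 0 ∨ z = 1) (hd : d = z * d1 + (1 - z) * d0) :
    1 - (1 - d) * z / t - d * (1 - z) / (1 - t)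
      = (1 - d0 / (1 - t)) + (d0 / (1 - t) - (1 - d1) / t) * z := by
  rcases hz with rfl | rfl <;> simp [hd]

lemma kappa_coeffs_add_mul_self (ht0 : t ≠ 0) (ht1 : 1 - t ≠ 0) (hd0 : d0 = 0 ∨ d0 = 1)
    (hd1 : d1 = 0 ∨ d1 = 1) (hmono : d0 ≤ d1) :
    (1 - d0 / (1 - t)) + (d0 / (1 - t) - (1 - d1) / t) * t
      = if d1 = 1 ∧ d0 = 0 then 1 else 0 := by
  calc (1 - d0 / (1 - t)) + (d0 / (1 - t) - (1 - d1) / t) * t = d1 - d0 := by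
        field_simp
        ring
    _ = if d1 = 1 ∧ d0 = 0 then 1 else 0 := by
      rcases hd1 with rfl | rfl <;> rcases hd0 with rfl | rfl
      · simp
      · norm_num at hmono
      · simp
      · simp

lemma abs_div_le_inv_of_eq_zero_or_one {c : ℝ} (hc : c = 0 ∨ c = 1) (hε : 0 < ε)
    (ht : ε ≤ t) : |c / t| ≤ ε⁻¹ := by
  rcases hc with rfl | rfl
  · simpa using hε.le
  · rw [one_div, abs_inv, abs_of_pos (hε.trans_le ht)]
    exact inv_anti₀ hε ht

lemma abs_kappa_intercept_le (hd0 : d0 = 0 ∨ d0 = 1) (hε : 0 < ε) (ht : t ≤ 1 - ε) :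
    |1 - d0 / (1 - t)| ≤ 1 + ε⁻¹ :=
  (abs_sub _ _).trans <| by
    rw [abs_one]
    gcongr
    exact abs_div_le_inv_of_eq_zero_or_one hd0 hε (by linarith)

lemma abs_kappa_slope_le (hd0 : d0 = 0 ∨ d0 = 1) (hd1 : d1 = 0 ∨ d1 = 1) (hε : 0 < ε)
    (ht : ε ≤ t ∧ t ≤ 1 - ε) : |d0 / (1 - t) - (1 - d1) / t| ≤ ε⁻¹ + ε⁻¹ := by
  have hd1' : 1 - d1 = 0 ∨ 1 - d1 = 1 := by rcases hd1 with rfl | rfl <;> simp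
  exact (abs_sub _ _).trans <| add_le_add
    (abs_div_le_inv_of_eq_zero_or_one hd0 hε (by linarith))
    (abs_div_le_inv_of_eq_zero_or_one hd1' hε ht.1)

end Kappa

section CondIndep

variable {Ω α β : Type*} {mΩ : MeasurableSpace Ω} [StandardBorelSpace Ω] {μ : Measure Ω}
  [IsFiniteMeasure μ] [MeasurableSpace α] [MeasurableSpace β] {X : Ω → α} {W : Ω → β}
  {Z : Ω → ℝ}

lemma setIntegral_inter_preimage_eq_condExp (hX : Measurable X) (hW : Measurable W)
    (hZ : Measurable Z) (hZval : ∀ ω, Z ω = 0 ∨ Z ω = 1)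
    (hci : CondIndepFun (.comap X inferInstance) hX.comap_le W Z μ)
    {A : Set α} (hA : MeasurableSet A) {T : Set β} (hT : MeasurableSet T) :
    ∫ ω in X ⁻¹' A ∩ W ⁻¹' T, Z ω ∂μ
      = ∫ ω in X ⁻¹' A ∩ W ⁻¹' T, (μ[Z | .comap X inferInstance]) ω ∂μ := by
  have hm := hX.comap_le
  have hXA : MeasurableSet[.comap X inferInstance] (X ⁻¹' A) := ⟨A, hA, rfl⟩
  have hWT : MeasurableSet (W ⁻¹' T) := hW hT
  have hZ_ind : Z = (Z ⁻¹' {1}).indicator fun _ => 1 := by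
    funext ω
    rcases hZval ω with h | h <;> simp [h]
  have hZ_int := integrable_of_forall_eq_zero_or_one (μ := μ) hZ hZval
  have hZ_side : μ[(W ⁻¹' T).indicator Z | .comap X inferInstance]
      =ᵐ[μ] μ⟦W ⁻¹' T | .comap X inferInstance⟧ * μ[Z | .comap X inferInstance] := by
    have h := (condIndepFun_iff_condExp_inter_preimage_eq_mul hW hZ).mp hci T {1} hT
      (measurableSet_singleton 1)
    rwa [← Set.indicator_indicator, ← hZ_ind] at h
  have hg_side : μ[(W ⁻¹' T).indicator (μ[Z | .comap X inferInstance]) | .comap X inferInstance]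
      =ᵐ[μ] μ[Z | .comap X inferInstance] * μ⟦W ⁻¹' T | .comap X inferInstance⟧ := by
    have h_eq : (W ⁻¹' T).indicator (μ[Z | .comap X inferInstance])
        = μ[Z | .comap X inferInstance] * (W ⁻¹' T).indicator 1 := by
      funext ω
      by_cases hω : ω ∈ W ⁻¹' T <;> simp [hω]
    rw [h_eq]
    refine condExp_mul_of_stronglyMeasurable_left stronglyMeasurable_condExp ?_
      ((integrable_const 1).indicator hWT)
    rw [← h_eq]
    exact integrable_condExp.indicator hWT
  rw [setIntegral_inter_eq_setIntegral_condExp hm hZ_int hXA hWT,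
    setIntegral_inter_eq_setIntegral_condExp hm integrable_condExp hXA hWT]
  refine integral_congr_ae (ae_restrict_of_ae ?_)
  filter_upwards [hZ_side, hg_side] with ω hZω hgω
  rw [hZω, hgω, Pi.mul_apply, Pi.mul_apply, mul_comm]

theorem condExp_comap_prodMk_eq_of_condIndepFun (hX : Measurable X) (hW : Measurable W)
    (hZ : Measurable Z) (hZval : ∀ ω, Z ω = 0 ∨ Z ω = 1)
    (hci : CondIndepFun (.comap X inferInstance) hX.comap_le W Z μ) :
    μ[Z | .comap (fun ω => (X ω, W ω)) inferInstance] =ᵐ[μ] μ[Z | .comap X inferInstance] := by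
  have hXW : Measurable fun ω => (X ω, W ω) := hX.prodMk hW
  have hle : MeasurableSpace.comap X inferInstance
      ≤ MeasurableSpace.comap (fun ω => (X ω, W ω)) inferInstance :=
    (measurable_fst.comp (comap_measurable (fun ω => (X ω, W ω)))).comap_le
  refine (ae_eq_condExp_of_forall_setIntegral_eq hXW.comap_le
    (integrable_of_forall_eq_zero_or_one hZ hZval) (fun _ _ _ => integrable_condExp.integrableOn)
    (fun s hs _ => ?_) (stronglyMeasurable_condExp.mono hle).aestronglyMeasurable).symm
  refine setIntegral_eq_of_isPiSystem hXW.comap_le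
    (by rw [← generateFrom_prod, MeasurableSpace.comap_generateFrom]; rfl)
    (isPiSystem_prod.comap (fun ω => (X ω, W ω)))
    integrable_condExp (integrable_of_forall_eq_zero_or_one hZ hZval)
    (integral_condExp hX.comap_le) ?_ hs
  rintro _ ⟨_, ⟨A, hA, T, hT, rfl⟩, rfl⟩
  exact (setIntegral_inter_preimage_eq_condExp hX hW hZ hZval hci hA hT).symm

end CondIndep

/-- Conditional version of Abadie's κ theorem: conditional on covariates and potential
treatments, `κ = 1 − (1−D)Z/q(X) − D(1−Z)/(1−q(X))` averages exactly to the indicator of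
being a complier, i.e. `E[κ | X, D(1), D(0)] = 1{D(1)=1, D(0)=0}` a.s. -/
theorem statement19 {Ω : Type*} [MeasurableSpace Ω] [StandardBorelSpace Ω]
    (μ : Measure Ω) [IsProbabilityMeasure μ]
    {k : ℕ} (Z D0 D1 D : Ω → ℝ) (X : Ω → Fin k → ℝ) (q : (Fin k → ℝ) → ℝ) (ε : ℝ)
    (hZ : Measurable Z) (hD0 : Measurable D0) (hD1 : Measurable D1)
    (hX : Measurable X) (hq : Measurable q)
    (hZval : ∀ ω, Z ω = 0 ∨ Z ω = 1) (hD0val : ∀ ω, D0 ω = 0 ∨ D0 ω = 1)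
    (hD1val : ∀ ω, D1 ω = 0 ∨ D1 ω = 1)
    (hD : ∀ ω, D ω = Z ω * D1 ω + (1 - Z ω) * D0 ω)
    (hci : CondIndepFun (MeasurableSpace.comap X inferInstance) hX.comap_le
      (fun ω => (D0 ω, D1 ω)) Z μ)
    (hmono : ∀ᵐ ω ∂μ, D0 ω ≤ D1 ω)
    (hε : 0 < ε) (hqb : ∀ᵐ ω ∂μ, ε ≤ q (X ω) ∧ q (X ω) ≤ 1 - ε)
    (hqcond : μ[Z | MeasurableSpace.comap X inferInstance] =ᵐ[μ] fun ω => q (X ω)) :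
    μ[(fun ω => 1 - (1 - D ω) * Z ω / q (X ω) - D ω * (1 - Z ω) / (1 - q (X ω))) |
        MeasurableSpace.comap (fun ω => (X ω, D1 ω, D0 ω)) inferInstance]
      =ᵐ[μ] fun ω => if D1 ω = 1 ∧ D0 ω = 0 then (1 : ℝ) else 0 := by
  have hm := (hX.prodMk (hD1.prodMk hD0)).comap_le
  have hXD : Measurable[.comap (fun ω => (X ω, D1 ω, D0 ω)) inferInstance]
      fun ω => (X ω, D1 ω, D0 ω) := comap_measurable _
  have hqX := hq.comp (measurable_fst.comp hXD)
  have hD1' := (measurable_fst.comp measurable_snd).comp hXD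
  have hD0' := (measurable_snd.comp measurable_snd).comp hXD
  have hZ_cond : μ[Z | .comap (fun ω => (X ω, D1 ω, D0 ω)) inferInstance]
      =ᵐ[μ] fun ω => q (X ω) :=
    (condExp_comap_prodMk_eq_of_condIndepFun hX (hD1.prodMk hD0) hZ hZval
      (hci.comp measurable_swap measurable_id)).trans hqcond
  set a : Ω → ℝ := fun ω => 1 - D0 ω / (1 - q (X ω))
  set b : Ω → ℝ := fun ω => D0 ω / (1 - q (X ω)) - (1 - D1 ω) / q (X ω)
  have ha : Measurable[.comap (fun ω => (X ω, D1 ω, D0 ω)) inferInstance] a :=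
    measurable_const.sub (hD0'.div (measurable_const.sub hqX))
  have hb : Measurable[.comap (fun ω => (X ω, D1 ω, D0 ω)) inferInstance] b :=
    (hD0'.div (measurable_const.sub hqX)).sub ((measurable_const.sub hD1').div hqX)
  have hκ : (fun ω => 1 - (1 - D ω) * Z ω / q (X ω) - D ω * (1 - Z ω) / (1 - q (X ω)))
      = a + b * Z := funext fun ω => kappa_eq_add_mul (hZval ω) (hD ω)
  rw [hκ]
  filter_upwards [condExp_add_mul_of_bound hm ha.stronglyMeasurable hb.stronglyMeasurable
      (hqb.mono fun ω hqω => abs_kappa_intercept_le (hD0val ω) hε hqω.2)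
      (hqb.mono fun ω hqω => abs_kappa_slope_le (hD0val ω) (hD1val ω) hε hqω)
      (integrable_of_forall_eq_zero_or_one hZ hZval), hZ_cond, hqb, hmono]
    with ω h_cond hZω hqω hmonoω
  rw [h_cond, Pi.add_apply, Pi.mul_apply, hZω]
  exact kappa_coeffs_add_mul_self (hε.trans_le hqω.1).ne' (by linarith) (hD0val ω) (hD1val ω)
    hmonoω
end
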